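/- arXiv:0904.4497 — 2 statements merged into one kernel-verified Lean document; each statement's English description precedes it below -/
import Mathlib

section
/- Let n ≥ 1 be an integer and p > 1 a real number, let g, j be differentiable on (0,∞), and let f be a twice continuously differentiable solution of the rotationally symmetric p-harmonic equation such that g(s) > 0, j(f(s)) > 0 and f'(s) > 0 for all s > 0. Then for every s > 0 the function Φ(s) := g(s)ⁿ·E(s)^{(p−2)/2}·f'(s) is differentiable with Φ'(s) = n·E(s)^{(p−2)/2}·g(s)^{n−2}·j(f(s))·j'(f(s)). In particular, if j'(f(s)) ≥ 0 for all s > 0, then Φ is non-decreasing on (0,∞). -/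
open Real Filter Topology

/-- Squared energy density `|dF|²(s) = f'(s)² + n · j(f(s))² / g(s)²` of the rotationally
symmetric map `F(s,θ) = (f(s),θ)` between `M_g` and `N_j`. -/
noncomputable def energyDensitySq (n : ℕ) (g j f : ℝ → ℝ) (s : ℝ) : ℝ :=
  (deriv f s) ^ 2 + (n : ℝ) * (j (f s)) ^ 2 / (g s) ^ 2

/-- `f` solves the rotationally symmetric `p`-harmonic equation `τ_p(F) = 0`. -/
def SolvesPHarmonic (n : ℕ) (p : ℝ) (g j f : ℝ → ℝ) : Prop :=
  ∀ s : ℝ, 0 < s → 0 < energyDensitySq n g j f s →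
    deriv (deriv f) s
      + ((n : ℝ) / (g s) ^ 2) * (g s * deriv g s * deriv f s - j (f s) * deriv j (f s))
      + (p - 2) * (energyDensitySq n g j f s)⁻¹ * deriv f s *
          (deriv f s * deriv (deriv f) s
            + (n : ℝ) * (j (f s) / (g s) ^ 3) *
                (deriv j (f s) * deriv f s * g s - j (f s) * deriv g s)) = 0

/-!
Write `E = |dF|²` and `q = (p - 2)/2`. Since `E' = 2 f' f'' + 2 n j/g³ (j' f' g - j g')`, the
`p`-harmonic equation is `f'' + n (g'/g) f' + q f' E'/E = n j j'/g²`, and by the product rule its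
left side is `Φ'/(gⁿ E^q)`. Hence `Φ' = n E^q gⁿ⁻² j j'`, which is nonnegative when `j' ≥ 0`.
-/

noncomputable def energyDensitySqDeriv (n : ℕ) (g j f : ℝ → ℝ) (s : ℝ) : ℝ :=
  2 * deriv f s * deriv (deriv f) s + 2 * n * j (f s) * deriv j (f s) * deriv f s / g s ^ 2
    - 2 * n * j (f s) ^ 2 * deriv g s / g s ^ 3

noncomputable def pHarmonicFlux (n : ℕ) (p : ℝ) (g j f : ℝ → ℝ) (s : ℝ) : ℝ :=
  g s ^ n * energyDensitySq n g j f s ^ ((p - 2) / 2) * deriv f s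

section

variable {n : ℕ} {p : ℝ} {g j f : ℝ → ℝ} {s : ℝ}

lemma energyDensitySq_pos (hf' : 0 < deriv f s) : 0 < energyDensitySq n g j f s := by
  unfold energyDensitySq
  positivity

lemma hasDerivAt_energyDensitySq (hf : DifferentiableAt ℝ f s)
    (hf' : DifferentiableAt ℝ (deriv f) s) (hj : DifferentiableAt ℝ j (f s))
    (hg : DifferentiableAt ℝ g s) (hgs : g s ≠ 0) :
    HasDerivAt (energyDensitySq n g j f) (energyDensitySqDeriv n g j f s) s := by
  have hjf : HasDerivAt (fun x => j (f x)) (deriv j (f s) * deriv f s) s :=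
    hj.hasDerivAt.comp s hf.hasDerivAt
  refine ((hf'.hasDerivAt.fun_pow 2).add (((hjf.fun_pow 2).const_mul (n : ℝ)).div
    (hg.hasDerivAt.fun_pow 2) (pow_ne_zero 2 hgs))).congr_deriv ?_
  unfold energyDensitySqDeriv
  field_simp
  ring

lemma SolvesPHarmonic.logDeriv_form (hsol : SolvesPHarmonic n p g j f) (hs : 0 < s)
    (hf' : 0 < deriv f s) (hgs : g s ≠ 0) :
    deriv (deriv f) s + n * deriv g s / g s * deriv f s
        + (p - 2) / 2 * deriv f s * energyDensitySqDeriv n g j f s / energyDensitySq n g j f s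
      = n * j (f s) * deriv j (f s) / g s ^ 2 := by
  have hE := energyDensitySq_pos (n := n) (g := g) (j := j) hf'
  have heq := hsol s hs hE
  unfold energyDensitySqDeriv
  field_simp at heq ⊢
  linear_combination heq

lemma natCast_mul_pow_sub_one {x : ℝ} (hx : x ≠ 0) (n : ℕ) :
    (n : ℝ) * x ^ (n - 1) = n * x ^ n / x := by
  rcases n with _ | n
  · simp
  · rw [pow_succ]
    field_simp
    simp

lemma hasDerivAt_pHarmonicFlux (hsol : SolvesPHarmonic n p g j f) (hs : 0 < s)
    (hf : DifferentiableAt ℝ f s) (hf'' : DifferentiableAt ℝ (deriv f) s)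
    (hj : DifferentiableAt ℝ j (f s)) (hg : DifferentiableAt ℝ g s)
    (hgs : 0 < g s) (hf' : 0 < deriv f s) :
    HasDerivAt (pHarmonicFlux n p g j f)
      (n * energyDensitySq n g j f s ^ ((p - 2) / 2) * g s ^ ((n : ℝ) - 2)
        * j (f s) * deriv j (f s)) s := by
  have hE := energyDensitySq_pos (n := n) (g := g) (j := j) hf'
  have hEs := (hasDerivAt_energyDensitySq (n := n) hf hf'' hj hg hgs.ne').rpow_const
    (p := (p - 2) / 2) (Or.inl hE.ne')
  refine (((hg.hasDerivAt.fun_pow n).fun_mul hEs).fun_mul hf''.hasDerivAt).congr_deriv ?_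
  have hlog := hsol.logDeriv_form hs hf' hgs.ne'
  rw [natCast_mul_pow_sub_one hgs.ne', rpow_sub_one hE.ne', rpow_sub hgs, rpow_natCast,
    rpow_two]
  field_simp at hlog ⊢
  linear_combination hlog

end

theorem monotone_quantity_general (n : ℕ) (p : ℝ) (g j f : ℝ → ℝ)
    (hg : ∀ s > (0:ℝ), DifferentiableAt ℝ g s)
    (hjf : ∀ s > (0:ℝ), DifferentiableAt ℝ j (f s))
    (hf : ContDiffOn ℝ 2 f (Set.Ici 0))
    (hsol : SolvesPHarmonic n p g j f)
    (hgpos : ∀ s > (0:ℝ), 0 < g s)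
    (hjfpos : ∀ s > (0:ℝ), 0 < j (f s))
    (hf'pos : ∀ s > (0:ℝ), 0 < deriv f s) :
    (∀ s > (0:ℝ),
      HasDerivAt (fun x : ℝ => g x ^ n * (energyDensitySq n g j f x) ^ ((p - 2) / 2) * deriv f x)
        ((n : ℝ) * (energyDensitySq n g j f s) ^ ((p - 2) / 2) * g s ^ ((n : ℝ) - 2)
          * j (f s) * deriv j (f s)) s) ∧
    ((∀ s > (0:ℝ), 0 ≤ deriv j (f s)) →
      MonotoneOn (fun x : ℝ => g x ^ n * (energyDensitySq n g j f x) ^ ((p - 2) / 2) * deriv f x)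
        (Set.Ioi 0)) := by
  have hderiv : ∀ s > (0:ℝ), HasDerivAt (pHarmonicFlux n p g j f)
      (n * energyDensitySq n g j f s ^ ((p - 2) / 2) * g s ^ ((n : ℝ) - 2)
        * j (f s) * deriv j (f s)) s := by
    intro s hs
    have hfs : ContDiffAt ℝ 2 f s := hf.contDiffAt (Ici_mem_nhds hs)
    exact hasDerivAt_pHarmonicFlux hsol hs (hfs.differentiableAt two_ne_zero)
      ((hfs.derivWithin (m := 1) le_rfl).differentiableAt one_ne_zero)
      (hjf s hs) (hg s hs) (hgpos s hs) (hf'pos s hs)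
  refine ⟨hderiv, fun hj' => monotoneOn_of_hasDerivWithinAt_nonneg (convex_Ioi 0)
    (fun x hx => (hderiv x hx).continuousAt.continuousWithinAt)
    (fun x hx => (hderiv x (interior_subset hx)).hasDerivWithinAt) fun x hx => ?_⟩
  rw [interior_Ioi] at hx
  have := hgpos x hx
  have := hjfpos x hx
  have := hj' x hx
  have := energyDensitySq_pos (n := n) (g := g) (j := j) (hf'pos x hx)
  positivity

/-- The quantity `Φ(s) = gⁿ(s) · |dF|^{p-2}(s) · f'(s)` satisfies
`Φ'(s) = n · |dF|^{p-2}(s) · g^{n-2}(s) · j(f(s)) · j'(f(s))`; in particular `Φ` is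
non-decreasing whenever `j'(f(s)) ≥ 0`. -/
theorem monotone_quantity (n : ℕ) (p : ℝ) (g j f : ℝ → ℝ)
    (hn : 1 ≤ n) (hp : 1 < p)
    (hg : ∀ s > (0:ℝ), DifferentiableAt ℝ g s)
    (hj : ∀ t > (0:ℝ), DifferentiableAt ℝ j t)
    (hjf : ∀ s > (0:ℝ), DifferentiableAt ℝ j (f s))
    (hf : ContDiffOn ℝ 2 f (Set.Ici 0))
    (hsol : SolvesPHarmonic n p g j f)
    (hgpos : ∀ s > (0:ℝ), 0 < g s)
    (hjfpos : ∀ s > (0:ℝ), 0 < j (f s))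
    (hf'pos : ∀ s > (0:ℝ), 0 < deriv f s) :
    (∀ s > (0:ℝ),
      HasDerivAt (fun x : ℝ => g x ^ n * (energyDensitySq n g j f x) ^ ((p - 2) / 2) * deriv f x)
        ((n : ℝ) * (energyDensitySq n g j f s) ^ ((p - 2) / 2) * g s ^ ((n : ℝ) - 2)
          * j (f s) * deriv j (f s)) s) ∧
    ((∀ s > (0:ℝ), 0 ≤ deriv j (f s)) →
      MonotoneOn (fun x : ℝ => g x ^ n * (energyDensitySq n g j f x) ^ ((p - 2) / 2) * deriv f x)
        (Set.Ioi 0)) :=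
  monotone_quantity_general n p g j f hg hjf hf hsol hgpos hjfpos hf'pos
end

section
/- Let n ≥ 1 be an integer and p > 1 a real number, let g, j be differentiable on (0,∞), let f be a twice continuously differentiable solution of the rotationally symmetric p-harmonic equation, and let h : [0,∞) → ℝ be twice differentiable. Fix s > 0 such that g(s) > 0, j(f(s)) > 0, f'(s) > 0 and h'(f(s)) > 0 (so in particular E(s) > 0). Define K̃(s) = n·j(f(s))·h'(f(s))/(E(s)·g(s)²), A₁(s) = j'(f(s))·[ (3−p)·f'(s)² + n·j(f(s))²/g(s)² ], A₂(s) = (p−2)·j(f(s))·[ g'(s)·f'(s)/g(s) + f''(s) ], and A₃(s) = (p−1)·f'(s)²·h''(f(s))·E(s)·g(s)²/(n·j(f(s))·h'(f(s))). Then (p−1)·( h'(f(s))·f''(s) + h''(f(s))·f'(s)² ) + n·(g'(s)/g(s))·f'(s)·h'(f(s)) = K̃(s)·( A₁(s) + A₂(s) + A₃(s) ). -/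
theorem energyDensitySq_pos_of_deriv_ne_zero {n : ℕ} {g j f : ℝ → ℝ} {s : ℝ}
    (hf' : deriv f s ≠ 0) : 0 < energyDensitySq n g j f s := by
  unfold energyDensitySq
  positivity

theorem energyDensitySq_mul_sq {n : ℕ} {g j f : ℝ → ℝ} {s : ℝ} (hgs : g s ≠ 0) :
    energyDensitySq n g j f s * g s ^ 2 = deriv f s ^ 2 * g s ^ 2 + (n : ℝ) * j (f s) ^ 2 := by
  rw [energyDensitySq]
  field_simp

/-- The `p`-harmonic equation solved for the radial operator `(p-1) f'' + n (g'/g) f'`: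
it equals `K̃ (A₁ + A₂) / h'`. -/
theorem SolvesPHarmonic.radial_eq {n : ℕ} {p : ℝ} {g j f : ℝ → ℝ}
    (hsol : SolvesPHarmonic n p g j f) {s : ℝ} (hs : 0 < s)
    (hE : 0 < energyDensitySq n g j f s) (hgs : g s ≠ 0) :
    (p - 1) * deriv (deriv f) s + (n : ℝ) * (deriv g s / g s) * deriv f s
      = (n : ℝ) * j (f s) / (energyDensitySq n g j f s * (g s) ^ 2) *
        (deriv j (f s) * ((3 - p) * (deriv f s) ^ 2 + (n : ℝ) * (j (f s)) ^ 2 / (g s) ^ 2)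
          + (p - 2) * j (f s) * (deriv g s * deriv f s / g s + deriv (deriv f) s)) := by
  have heq := hsol s hs hE
  have hEg := energyDensitySq_mul_sq (n := n) (j := j) (f := f) hgs
  have hE0 := hE.ne'
  -- keeping `E` opaque leaves a polynomial identity in `E`, closed modulo `hEg`
  set E := energyDensitySq n g j f s
  field_simp at heq ⊢
  linear_combination g s * heq
    + ((p - 2) * deriv (deriv f) s * g s ^ 2 + n * j (f s) * deriv j (f s)) * hEg

theorem decomposition_identity_general (n : ℕ) (p : ℝ) (g j f h : ℝ → ℝ) (s : ℝ)
    (hn : 1 ≤ n)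
    (hsol : SolvesPHarmonic n p g j f)
    (hs : 0 < s) (hgs : 0 < g s) (hjfs : 0 < j (f s))
    (hf's : 0 < deriv f s) (hh's : 0 < deriv h (f s)) :
    (p - 1) * (deriv h (f s) * deriv (deriv f) s + deriv (deriv h) (f s) * (deriv f s) ^ 2)
      + (n : ℝ) * (deriv g s / g s) * deriv f s * deriv h (f s)
    = ((n : ℝ) * j (f s) * deriv h (f s) / (energyDensitySq n g j f s * (g s) ^ 2)) *
        (deriv j (f s) * ((3 - p) * (deriv f s) ^ 2 + (n : ℝ) * (j (f s)) ^ 2 / (g s) ^ 2)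
          + (p - 2) * j (f s) * (deriv g s * deriv f s / g s + deriv (deriv f) s)
          + (p - 1) * (deriv f s) ^ 2 * deriv (deriv h) (f s) * energyDensitySq n g j f s
              * (g s) ^ 2 / ((n : ℝ) * j (f s) * deriv h (f s))) := by
  have hE := energyDensitySq_pos_of_deriv_ne_zero (n := n) (g := g) (j := j) hf's.ne'
  have hn0 : (n : ℝ) ≠ 0 := Nat.cast_ne_zero.mpr (by omega)
  calc _ = deriv h (f s) * ((p - 1) * deriv (deriv f) s
              + (n : ℝ) * (deriv g s / g s) * deriv f s)
            + (p - 1) * (deriv f s) ^ 2 * deriv (deriv h) (f s) := by ring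
    _ = _ := by
      rw [hsol.radial_eq hs hE hgs.ne']
      field_simp

/-- **Formula (3.1)**: for a solution `f` of the rotationally symmetric `p`-harmonic
equation, at any `s > 0` with `g(s) > 0`, `j(f(s)) > 0`, `f'(s) > 0`, `h'(f(s)) > 0`,
`(p-1)·(h'(f(s))·f''(s) + h''(f(s))·f'(s)²) + n·(g'(s)/g(s))·f'(s)·h'(f(s))
  = K̃(s)·(A₁(s) + A₂(s) + A₃(s))`. -/
theorem decomposition_identity (n : ℕ) (p : ℝ) (g j f h : ℝ → ℝ) (s : ℝ)
    (hn : 1 ≤ n) (hp : 1 < p)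
    (hg : ∀ x > (0:ℝ), DifferentiableAt ℝ g x)
    (hj : ∀ t > (0:ℝ), DifferentiableAt ℝ j t)
    (hf : ContDiffOn ℝ 2 f (Set.Ici 0))
    (hsol : SolvesPHarmonic n p g j f)
    (hh : ∀ t ≥ (0:ℝ), DifferentiableAt ℝ h t)
    (hh' : ∀ t ≥ (0:ℝ), DifferentiableAt ℝ (deriv h) t)
    (hs : 0 < s) (hgs : 0 < g s) (hjfs : 0 < j (f s))
    (hf's : 0 < deriv f s) (hh's : 0 < deriv h (f s)) :
    (p - 1) * (deriv h (f s) * deriv (deriv f) s + deriv (deriv h) (f s) * (deriv f s) ^ 2)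
      + (n : ℝ) * (deriv g s / g s) * deriv f s * deriv h (f s)
    = ((n : ℝ) * j (f s) * deriv h (f s) / (energyDensitySq n g j f s * (g s) ^ 2)) *
        (deriv j (f s) * ((3 - p) * (deriv f s) ^ 2 + (n : ℝ) * (j (f s)) ^ 2 / (g s) ^ 2)
          + (p - 2) * j (f s) * (deriv g s * deriv f s / g s + deriv (deriv f) s)
          + (p - 1) * (deriv f s) ^ 2 * deriv (deriv h) (f s) * energyDensitySq n g j f s
              * (g s) ^ 2 / ((n : ℝ) * j (f s) * deriv h (f s))) :=
  decomposition_identity_general n p g j f h s hn hsol hs hgs hjfs hf's hh's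
end
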